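/- arXiv:1009.0558 — 7 statements merged into one kernel-verified Lean document; each statement's English description precedes it below -/
import Mathlib

section
/- For every ε > 0 and every p₀ ∈ (0, ε²/(1+ε²)], the measurement periods satisfy T^(2) = arccos(1 - 2(1 + 1/ε²)p₀)/√(1+ε²) ≥ T^(1) = arccos(1 - 2p₀)/ε. -/
/-!
Put `φ = arcsin √p₀` and `k = √(1 + ε²) / ε ≥ 1`. The identity `arccos (1 - 2x²) = 2 arcsin x`
turns `T⁽¹⁾` into `2φ / ε` and `T⁽²⁾` into `2 arcsin (k sin φ) / (kε)`, so the claim is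
`kφ ≤ arcsin (k sin φ)`. Jordan's inequality `2φ/π ≤ sin φ` together with `k sin φ ≤ 1` keeps `kφ`
in `[0, π/2]`, and concavity of `sin` on `[0, π]` gives `sin (kφ) ≤ k sin φ`.
-/

open Real

lemma Real.sin_mul_le_mul_sin {k x : ℝ} (hk : 1 ≤ k) (hx : 0 ≤ x) (hkx : k * x ≤ π) :
    sin (k * x) ≤ k * sin x := by
  have hk₀ : 0 < k := one_pos.trans_le hk
  have h := strictConcaveOn_sin_Icc.concaveOn.2 (⟨le_rfl, pi_pos.le⟩ : (0 : ℝ) ∈ Set.Icc 0 π)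
    (⟨by positivity, hkx⟩ : k * x ∈ Set.Icc 0 π) (sub_nonneg.2 (inv_le_one_of_one_le₀ hk))
    (inv_nonneg.2 hk₀.le) (sub_add_cancel 1 k⁻¹)
  simp only [smul_eq_mul, mul_zero, zero_add, sin_zero, inv_mul_cancel_left₀ hk₀.ne'] at h
  rwa [inv_mul_le_iff₀ hk₀] at h

lemma Real.mul_arcsin_le_arcsin_mul {k x : ℝ} (hk : 1 ≤ k) (hx : 0 ≤ x) (hkx : k * x ≤ 1) :
    k * arcsin x ≤ arcsin (k * x) := by
  have hx₁ : x ≤ 1 := (le_mul_of_one_le_left hx hk).trans hkx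
  have hφ₀ : 0 ≤ arcsin x := arcsin_nonneg.2 hx
  have hsin : sin (arcsin x) = x := sin_arcsin (by linarith) hx₁
  have hkφ : k * arcsin x ≤ π / 2 := by
    have hJordan := mul_le_sin hφ₀ (arcsin_le_pi_div_two x)
    rw [hsin] at hJordan
    have := mul_le_mul_of_nonneg_left hJordan (by linarith : (0 : ℝ) ≤ k)
    rw [div_mul_eq_mul_div, ← mul_div_assoc, div_le_iff₀ pi_pos] at this
    nlinarith [pi_pos]
  calc k * arcsin x = arcsin (sin (k * arcsin x)) :=
        (arcsin_sin (by nlinarith [pi_pos]) hkφ).symm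
    _ ≤ arcsin (k * x) := arcsin_le_arcsin <|
        (sin_mul_le_mul_sin hk hφ₀ (by linarith [pi_pos])).trans_eq (by rw [hsin])

lemma Real.arccos_one_sub_two_mul_sq {x : ℝ} (hx₀ : 0 ≤ x) (hx₁ : x ≤ 1) :
    arccos (1 - 2 * x ^ 2) = 2 * arcsin x := by
  have h₀ : 0 ≤ 2 * arcsin x := mul_nonneg zero_le_two (arcsin_nonneg.2 hx₀)
  rw [← arccos_cos h₀ (by linarith [arcsin_le_pi_div_two x]), cos_two_mul, cos_sq',
    sin_arcsin (by linarith) hx₁]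
  ring_nf

/-- `T⁽²⁾ ≥ T⁽¹⁾` for every `ε > 0` and `p₀ ∈ (0, ε²/(1+ε²)]`. -/
theorem period_two_ge_period_one (ε p₀ : ℝ) (hε : 0 < ε)
    (hp₀ : p₀ ∈ Set.Ioc 0 (ε ^ 2 / (1 + ε ^ 2))) :
    Real.arccos (1 - 2 * (1 + 1 / ε ^ 2) * p₀) / Real.sqrt (1 + ε ^ 2) ≥
      Real.arccos (1 - 2 * p₀) / ε := by
  obtain ⟨hp₀_pos, hp₀_le⟩ := hp₀
  set S := √(1 + ε ^ 2)
  set k := S / ε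
  have hS : S ^ 2 = 1 + ε ^ 2 := sq_sqrt (by positivity)
  have hk : 1 ≤ k := by
    rw [le_div_iff₀ hε, one_mul]
    exact le_sqrt_of_sq_le (by linarith)
  have hkp : (k * √p₀) ^ 2 = (1 + 1 / ε ^ 2) * p₀ := by
    rw [mul_pow, div_pow, hS, sq_sqrt hp₀_pos.le]
    field_simp
    ring
  have hkp_le : k * √p₀ ≤ 1 := by
    have : (1 + 1 / ε ^ 2) * p₀ ≤ 1 := by
      rw [le_div_iff₀ (by positivity)] at hp₀_le
      field_simp
      linarith
    exact (pow_le_one_iff_of_nonneg (by positivity) two_ne_zero).1 (hkp ▸ this)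
  have h₁ := arccos_one_sub_two_mul_sq (sqrt_nonneg p₀)
    ((le_mul_of_one_le_left (sqrt_nonneg _) hk).trans hkp_le)
  have h₂ := arccos_one_sub_two_mul_sq (by positivity) hkp_le
  rw [sq_sqrt hp₀_pos.le] at h₁
  rw [hkp, ← mul_assoc] at h₂
  rw [h₁, h₂, ge_iff_le, div_le_div_iff₀ hε (by positivity)]
  calc 2 * arcsin √p₀ * S = 2 * (k * arcsin √p₀) * ε := by
        rw [← div_mul_cancel₀ S hε.ne']; ring
    _ ≤ 2 * arcsin (k * √p₀) * ε := by
        gcongr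
        exact mul_arcsin_le_arcsin_mul hk (sqrt_nonneg p₀) hkp_le
end

section
/- For all ε > 0, επ/√(1+ε²) ≥ arccos((1-ε²)/(1+ε²)). -/
/-!
Writing `θ = arctan ε ∈ [0, π/2)`, the half-angle formula gives
`arccos ((1 - ε²)/(1 + ε²)) = 2θ`, while `sin θ = ε/√(1 + ε²)`. The inequality is therefore
Jordan's inequality `2θ/π ≤ sin θ`, multiplied by `π`.
-/

open Real

lemma cos_two_mul_arctan (x : ℝ) : cos (2 * arctan x) = (1 - x ^ 2) / (1 + x ^ 2) := by
  have hpos : 0 < 1 + x ^ 2 := by positivity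
  rw [cos_two_mul, cos_arctan, div_pow, one_pow, sq_sqrt hpos.le]
  field_simp
  ring

lemma arccos_one_sub_sq_div_one_add_sq {x : ℝ} (hx : 0 ≤ x) :
    arccos ((1 - x ^ 2) / (1 + x ^ 2)) = 2 * arctan x := by
  have h_nonneg : 0 ≤ arctan x := arctan_nonneg.2 hx
  have h_lt : arctan x < π / 2 := arctan_lt_pi_div_two x
  rw [← cos_two_mul_arctan, arccos_cos (by linarith) (by linarith)]

lemma two_mul_arctan_le {x : ℝ} (hx : 0 ≤ x) : 2 * arctan x ≤ x * π / √(1 + x ^ 2) := by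
  have hjordan : 2 / π * arctan x ≤ x / √(1 + x ^ 2) := by
    rw [← sin_arctan]
    exact mul_le_sin (arctan_nonneg.2 hx) (arctan_lt_pi_div_two x).le
  calc 2 * arctan x = π * (2 / π * arctan x) := by field_simp
    _ ≤ π * (x / √(1 + x ^ 2)) := by gcongr
    _ = x * π / √(1 + x ^ 2) := by ring

/-- For all `ε > 0`, `επ/√(1+ε²) ≥ arccos((1-ε²)/(1+ε²))`. -/
theorem boundary_period_inequality (ε : ℝ) (hε : 0 < ε) :
    ε * π / Real.sqrt (1 + ε ^ 2) ≥ Real.arccos ((1 - ε ^ 2) / (1 + ε ^ 2)) := by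
  rw [ge_iff_le, arccos_one_sub_sq_div_one_add_sq hε.le]
  exact two_mul_arctan_le hε.le
end

section
/- For all x ∈ [-1, 1], (π/√2)·√(1-x) ≥ arccos(x), with equality exactly when x = 1 or x = -1. -/
/-!
Write `x = cos θ` with `θ = arccos x ∈ [0, π]`. The half-angle formula turns the left-hand side into
`π sin (θ / 2)`, so the claim is Jordan's inequality `(2 / π) t ≤ sin t` on `[0, π / 2]` at `t = θ / 2`,
which is strict for `0 < t < π / 2`, that is, for `x ≠ ±1`.
-/

open Real

namespace Real

theorem sqrt_one_sub_cos_eq {θ : ℝ} (h₀ : 0 ≤ θ) (h₂π : θ ≤ 2 * π) :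
    √(1 - cos θ) = √2 * sin (θ / 2) := by
  rw [sin_half_eq_sqrt h₀ h₂π, ← sqrt_mul zero_le_two]
  ring_nf

theorem pi_div_sqrt_two_mul_sqrt_one_sub_eq {x : ℝ} (hlo : -1 ≤ x) (hhi : x ≤ 1) :
    π / √2 * √(1 - x) = π * sin (arccos x / 2) := by
  have hθ : √(1 - x) = √2 * sin (arccos x / 2) := by
    conv_lhs => rw [← cos_arccos hlo hhi]
    exact sqrt_one_sub_cos_eq (arccos_nonneg x) (by linarith [arccos_le_pi x, pi_pos])
  rw [hθ]
  field_simp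

theorem self_le_pi_mul_sin_half {θ : ℝ} (h₀ : 0 ≤ θ) (hπ : θ ≤ π) : θ ≤ π * sin (θ / 2) :=
  calc θ = π * (2 / π * (θ / 2)) := by field_simp
    _ ≤ π * sin (θ / 2) := by gcongr; exact mul_le_sin (by linarith) (by linarith)

theorem self_lt_pi_mul_sin_half {θ : ℝ} (h₀ : 0 < θ) (hπ : θ < π) : θ < π * sin (θ / 2) :=
  calc θ = π * (2 / π * (θ / 2)) := by field_simp
    _ < π * sin (θ / 2) := by gcongr; exact mul_lt_sin (by linarith) (by linarith)

theorem self_eq_pi_mul_sin_half_iff {θ : ℝ} (h₀ : 0 ≤ θ) (hπ : θ ≤ π) :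
    θ = π * sin (θ / 2) ↔ θ = 0 ∨ θ = π := by
  refine ⟨fun h ↦ ?_, ?_⟩
  · by_contra! hne
    exact (self_lt_pi_mul_sin_half (h₀.lt_of_ne' hne.1) (hπ.lt_of_ne hne.2)).ne h
  · rintro (rfl | rfl) <;> simp

end Real

/-- For all `x ∈ [-1,1]`, `(π/√2)√(1-x) ≥ arccos x`, with equality iff `x = 1` or `x = -1`. -/
theorem sqrt_ineq_arccos (x : ℝ) (hx : x ∈ Set.Icc (-1 : ℝ) 1) :
    (π / Real.sqrt 2) * Real.sqrt (1 - x) ≥ Real.arccos x ∧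
      ((π / Real.sqrt 2) * Real.sqrt (1 - x) = Real.arccos x ↔ x = 1 ∨ x = -1) := by
  obtain ⟨hlo, hhi⟩ := hx
  rw [pi_div_sqrt_two_mul_sqrt_one_sub_eq hlo hhi, eq_comm,
    self_eq_pi_mul_sin_half_iff (arccos_nonneg x) (arccos_le_pi x), arccos_eq_zero, arccos_eq_pi]
  refine ⟨self_le_pi_mul_sin_half (arccos_nonneg x) (arccos_le_pi x), ?_⟩
  constructor
  · rintro (h | h)
    exacts [Or.inl (le_antisymm hhi h), Or.inr (le_antisymm h hlo)]
  · rintro (rfl | rfl)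
    exacts [Or.inl le_rfl, Or.inr le_rfl]
end

section
/- Let ε₀ ≠ 0, ω₀ = √(1+ε₀²), z^A(t) = (ε₀²/(1+ε₀²))cos(ω₀t) + 1/(1+ε₀²), and z^B(t) = cos(ε₀t). Then z^A(t) ≥ z^B(t) for all t ∈ [0, π/|ε₀|]. -/
/-!
By the half-angle formula `cos (2y) = 1 - 2 sin² y`, with `x = t / 2` the inequality is equivalent
to `ε₀² sin² (ω₀ x) ≤ ω₀² sin² (ε₀ x)`, i.e. to `|sin r| / r ≤ sin s / s` for `s = |ε₀| x` and
`r = ω₀ x`, where `0 < s ≤ π / 2` and `s ≤ r`. If `r ≤ π` this is the monotonicity of `sin x / x`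
on `(0, π]`, a consequence of the concavity of `sin` there; if `r > π`, Jordan's inequality gives
`sin s / s ≥ 2 / π > 1 / r ≥ |sin r| / r`.
-/

open Real Set

theorem antitoneOn_sin_div : AntitoneOn (fun x => sin x / x) (Ioc 0 π) := by
  have hslope := strictConcaveOn_sin_Icc.concaveOn.slope_anti (left_mem_Icc.2 pi_pos.le)
  rw [Icc_sdiff_left] at hslope
  refine hslope.congr fun x _ => ?_
  simp [slope_def_field]

theorem abs_sin_div_le_sin_div {s r : ℝ} (hs : 0 < s) (hsπ : s ≤ π / 2) (hsr : s ≤ r) :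
    |sin r| / r ≤ sin s / s := by
  rcases le_or_gt r π with hrπ | hπr
  · rw [abs_of_nonneg (sin_nonneg_of_nonneg_of_le_pi (hs.le.trans hsr) hrπ)]
    exact antitoneOn_sin_div ⟨hs, by linarith [pi_pos]⟩ ⟨hs.trans_le hsr, hrπ⟩ hsr
  · have hjordan : 2 / π ≤ sin s / s := by
      rw [le_div_iff₀ hs]
      exact mul_le_sin hs.le hsπ
    calc |sin r| / r ≤ 1 / r := div_le_div_of_nonneg_right (abs_sin_le_one r) (by linarith)
      _ ≤ 1 / π := by gcongr
      _ ≤ 2 / π := by gcongr; norm_num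
      _ ≤ sin s / s := hjordan

theorem mul_abs_sin_mul_le {a b x : ℝ} (ha : 0 ≤ a) (hab : a ≤ b) (hx : 0 ≤ x)
    (hax : a * x ≤ π / 2) : a * |sin (b * x)| ≤ b * sin (a * x) := by
  rcases (mul_nonneg ha hx).eq_or_lt with hzero | hpos
  · rcases mul_eq_zero.1 hzero.symm with rfl | rfl <;> simp
  have hbx : 0 < b * x := hpos.trans_le (by gcongr)
  have h := abs_sin_div_le_sin_div (r := b * x) hpos hax (by gcongr)
  rw [div_le_div_iff₀ hbx hpos] at h
  refine le_of_mul_le_mul_right ?_ (pos_of_mul_pos_right hpos ha)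
  calc a * |sin (b * x)| * x = |sin (b * x)| * (a * x) := by ring
    _ ≤ sin (a * x) * (b * x) := h
    _ = b * sin (a * x) * x := by ring

theorem sq_mul_sin_mul_sq_le {a b x : ℝ} (hab : |a| ≤ b) (hx : 0 ≤ x)
    (hax : |a| * x ≤ π / 2) : a ^ 2 * sin (b * x) ^ 2 ≤ b ^ 2 * sin (a * x) ^ 2 := by
  have h := pow_le_pow_left₀ (by positivity) (mul_abs_sin_mul_le (abs_nonneg a) hab hx hax) 2
  rw [mul_pow, mul_pow, sq_abs, sq_abs] at h
  rcases abs_choice a with ha | ha <;> simpa [ha] using h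

/-- Lemma 1: `z^A(t) = (ε₀²/(1+ε₀²))cos(ω₀t) + 1/(1+ε₀²)` dominates `z^B(t) = cos(ε₀t)`
on `[0, π/|ε₀|]`, where `ω₀ = √(1+ε₀²)`. -/
theorem zA_ge_zB_const (ε₀ : ℝ) (hε₀ : ε₀ ≠ 0)
    (ω₀ : ℝ) (hω₀ : ω₀ = Real.sqrt (1 + ε₀ ^ 2)) :
    ∀ t ∈ Set.Icc 0 (π / |ε₀|),
      (ε₀ ^ 2 / (1 + ε₀ ^ 2)) * Real.cos (ω₀ * t) + 1 / (1 + ε₀ ^ 2) ≥ Real.cos (ε₀ * t) := by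
  rintro t ⟨ht0, htπ⟩
  have hden : 0 < 1 + ε₀ ^ 2 := by positivity
  have hω_sq : ω₀ ^ 2 = 1 + ε₀ ^ 2 := by rw [hω₀, sq_sqrt hden.le]
  have hεω : |ε₀| ≤ ω₀ := hω₀ ▸ abs_le_sqrt (by linarith)
  have hεt : |ε₀| * (t / 2) ≤ π / 2 := by
    have := (le_div_iff₀ (abs_pos.2 hε₀)).1 htπ
    linarith
  have key := sq_mul_sin_mul_sq_le hεω (by positivity) hεt
  rw [hω_sq] at key
  rw [show ω₀ * t = 2 * (ω₀ * (t / 2)) by ring, show ε₀ * t = 2 * (ε₀ * (t / 2)) by ring,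
    cos_two_mul_eq_one_sub, cos_two_mul_eq_one_sub, ge_iff_le, div_mul_eq_mul_div,
    ← add_div, le_div_iff₀ hden]
  linarith
end

section
/- Let ε > 0. For any measurable control ε(t) with |ε(t)| ≤ ε, let (x^A(t), y^A(t), z^A(t)) solve ẋ = -y, ẏ = x - ε(t)z, ż = ε(t)y with initial condition (0,0,1), and let z^B(t) = cos(εt). Then z^A(t) ≥ z^B(t) for all t ∈ [0, π/ε]. -/
/-!
Conservation of `x² + y² + z² = 1` gives `|ż| = |ε(t) y| ≤ ε √(1 - z²)`: the polar angle of the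
Bloch vector grows at rate at most `ε`. Since `arccos` is singular at `z = 1`, we do not
differentiate the angle but fence `z` from below by the strictly faster barrier
`cos ((ε + η) t + η)`, and let `η → 0⁺`.
-/

open Real Set Filter Topology

theorem bloch_sq_add_sq_add_sq_eq {u x y z : ℝ → ℝ} (hx : ∀ t, HasDerivAt x (-(y t)) t)
    (hy : ∀ t, HasDerivAt y (x t - u t * z t) t) (hz : ∀ t, HasDerivAt z (u t * y t) t) (t : ℝ) :
    x t ^ 2 + y t ^ 2 + z t ^ 2 = x 0 ^ 2 + y 0 ^ 2 + z 0 ^ 2 := by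
  have hderiv : ∀ s, HasDerivAt (fun r => x r ^ 2 + y r ^ 2 + z r ^ 2) 0 s := fun s => by
    refine ((((hx s).fun_pow 2).add ((hy s).fun_pow 2)).add ((hz s).fun_pow 2)).congr_deriv ?_
    ring
  exact is_const_of_deriv_eq_zero (fun s => (hderiv s).differentiableAt)
    (fun s => (hderiv s).deriv) t 0

section Comparison

variable {ε : ℝ} {z z' : ℝ → ℝ}

theorem cos_add_le_of_neg_mul_sqrt_le_deriv (hε : 0 ≤ ε) (hz : ∀ s, HasDerivAt z (z' s) s)
    (hz0 : z 0 = 1) (hz' : ∀ s, -(ε * √(1 - z s ^ 2)) ≤ z' s) {η t : ℝ} (hη : 0 < η)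
    (ht : (ε + η) * t + η ≤ π) :
    ∀ s ∈ Icc 0 t, cos ((ε + η) * s + η) ≤ z s := by
  have hbarrier : ∀ s, HasDerivAt (fun s => cos ((ε + η) * s + η))
      (-sin ((ε + η) * s + η) * (ε + η)) s := fun s => by
    simpa using (((hasDerivAt_id s).const_mul (ε + η)).add_const η).cos
  refine image_le_of_deriv_right_lt_deriv_boundary (by fun_prop)
    (fun s _ => (hbarrier s).hasDerivWithinAt) ?_ hz ?_
  · simpa [hz0] using cos_le_one η
  · rintro s ⟨hs0, hst⟩ hcontact
    have hangle_pos : 0 < (ε + η) * s + η := by nlinarith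
    have hangle_lt : (ε + η) * s + η < π := by nlinarith
    have hsin_pos : 0 < sin ((ε + η) * s + η) := sin_pos_of_pos_of_lt_pi hangle_pos hangle_lt
    have hz's := hz' s
    rw [← hcontact, ← sin_eq_sqrt_one_sub_cos_sq hangle_pos.le hangle_lt.le] at hz's
    nlinarith

theorem cos_mul_le_of_neg_mul_sqrt_le_deriv (hε : 0 < ε) (hz : ∀ s, HasDerivAt z (z' s) s)
    (hz0 : z 0 = 1) (hz' : ∀ s, -(ε * √(1 - z s ^ 2)) ≤ z' s) :
    ∀ t ∈ Icc 0 (π / ε), cos (ε * t) ≤ z t := by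
  have hIco : ∀ t ∈ Ico 0 (π / ε), cos (ε * t) ≤ z t := by
    rintro t ⟨ht0, htπ⟩
    have hεt : ε * t < π := (lt_div_iff₀' hε).1 htπ
    have hangle : Tendsto (fun η => (ε + η) * t + η) (𝓝[>] 0) (𝓝 (ε * t)) := by
      have hcont : Continuous fun η : ℝ => (ε + η) * t + η := by fun_prop
      simpa using (hcont.tendsto 0).mono_left nhdsWithin_le_nhds
    refine le_of_tendsto ((continuous_cos.tendsto _).comp hangle) ?_
    filter_upwards [self_mem_nhdsWithin, hangle.eventually_lt_const hεt] with η hη hηπ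
    exact cos_add_le_of_neg_mul_sqrt_le_deriv hε.le hz hz0 hz' hη hηπ.le t ⟨ht0, le_rfl⟩
  have hclosed : IsClosed {t | cos (ε * t) ≤ z t} :=
    isClosed_le (by fun_prop) (continuous_iff_continuousAt.2 fun s => (hz s).continuousAt)
  rw [← closure_Ico (div_pos pi_pos hε).ne]
  exact closure_minimal hIco hclosed

end Comparison

theorem zA_ge_zB_time_varying_general (ε : ℝ) (hε : 0 < ε)
    (u : ℝ → ℝ) (hbound : ∀ t, |u t| ≤ ε)
    (x y z : ℝ → ℝ)
    (hx : ∀ t, HasDerivAt x (-(y t)) t)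
    (hy : ∀ t, HasDerivAt y (x t - u t * z t) t)
    (hz : ∀ t, HasDerivAt z (u t * y t) t)
    (hx0 : x 0 = 0) (hy0 : y 0 = 0) (hz0 : z 0 = 1) :
    ∀ t ∈ Set.Icc 0 (π / ε), z t ≥ Real.cos (ε * t) := by
  have hy_le : ∀ s, |y s| ≤ √(1 - z s ^ 2) := fun s => by
    have hnorm := bloch_sq_add_sq_add_sq_eq hx hy hz s
    rw [hx0, hy0, hz0] at hnorm
    exact abs_le_sqrt (by nlinarith)
  have hz' : ∀ s, -(ε * √(1 - z s ^ 2)) ≤ u s * y s := fun s => by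
    have hprod := mul_le_mul (hbound s) (hy_le s) (abs_nonneg _) hε.le
    rw [← abs_mul] at hprod
    linarith [neg_abs_le (u s * y s)]
  exact cos_mul_le_of_neg_mul_sqrt_le_deriv hε hz hz0 hz'

/-- Lemma 2: under `H = I_z + ε(t)I_x` with `|ε(t)| ≤ ε`, the Bloch `z`-component starting
from `(0,0,1)` dominates `cos(εt)` on `[0, π/ε]`. -/
theorem zA_ge_zB_time_varying (ε : ℝ) (hε : 0 < ε)
    (u : ℝ → ℝ) (hu : Measurable u) (hbound : ∀ t, |u t| ≤ ε)
    (x y z : ℝ → ℝ)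
    (hx : ∀ t, HasDerivAt x (-(y t)) t)
    (hy : ∀ t, HasDerivAt y (x t - u t * z t) t)
    (hz : ∀ t, HasDerivAt z (u t * y t) t)
    (hx0 : x 0 = 0) (hy0 : y 0 = 0) (hz0 : z 0 = 1) :
    ∀ t ∈ Set.Icc 0 (π / ε), z t ≥ Real.cos (ε * t) :=
  zA_ge_zB_time_varying_general ε hε u hbound x y z hx hy hz hx0 hy0 hz0
end

section
/- Let ε > 0. For any measurable controls ε_x(t), ε_y(t) with √(ε_x(t)² + ε_y(t)²) ≤ ε, let (x(t), y(t), z(t)) solve ẋ = -y + ε_y(t)z, ẏ = x - ε_x(t)z, ż = -ε_y(t)x + ε_x(t)y with initial condition (0,0,1). If p₀ ∈ (0,1) and t ∈ [0, arccos(1-2p₀)/ε], then (1 - z(t))/2 ≤ p₀. -/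
/-!
Since `ż = -ε_y x + ε_x y`, Cauchy–Schwarz and the conservation of `x² + y² + z² = 1` give
`-ż ≤ ε √(1 - z²)`: the polar angle `arccos z` grows at rate at most `ε`, so `z(t) ≥ cos (ε t)`
as long as `ε t < π`. Because `√(1 - z²)` is not Lipschitz at `z = 1`, this comparison is made
against the strict barriers `cos ((ε + δ) (t + δ))`, which start below `z(0) = 1`, and then `δ → 0`.
-/

open Real Set Filter Topology

/-- The Bloch equations `v̇ = (ε_x, ε_y, 1) × v` for `v = (x, y, z)`. -/
structure IsBlochSolution (ux uy x y z : ℝ → ℝ) : Prop where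
  hasDerivAt_x : ∀ t, HasDerivAt x (-(y t) + uy t * z t) t
  hasDerivAt_y : ∀ t, HasDerivAt y (x t - ux t * z t) t
  hasDerivAt_z : ∀ t, HasDerivAt z (-(uy t) * x t + ux t * y t) t

theorem IsBlochSolution.sq_add_sq_add_sq_eq {ux uy x y z : ℝ → ℝ}
    (h : IsBlochSolution ux uy x y z) (t : ℝ) :
    x t ^ 2 + y t ^ 2 + z t ^ 2 = x 0 ^ 2 + y 0 ^ 2 + z 0 ^ 2 := by
  have hderiv : ∀ s, HasDerivAt (fun s => x s ^ 2 + y s ^ 2 + z s ^ 2) 0 s := fun s => by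
    refine (((h.hasDerivAt_x s).pow 2).add ((h.hasDerivAt_y s).pow 2)
      |>.add ((h.hasDerivAt_z s).pow 2)).congr_deriv ?_
    ring
  exact is_const_of_deriv_eq_zero (fun s => (hderiv s).differentiableAt)
    (fun s => (hderiv s).deriv) t 0

theorem mul_sub_mul_le_sqrt_mul_sqrt (a b c d : ℝ) :
    b * c - a * d ≤ √(a ^ 2 + b ^ 2) * √(c ^ 2 + d ^ 2) := by
  rw [← sqrt_mul (by positivity)]
  refine (le_abs_self _).trans (abs_le_sqrt ?_)
  nlinarith [sq_nonneg (a * c + b * d)]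

/-- Strict barrier: `cos (c (t + δ))` starts strictly below `f 0 = 1` and falls faster than `f`
can wherever the two meet, since there `√(1 - f²) = sin (c (t + δ)) > 0`. -/
theorem cos_mul_add_le_of_neg_deriv_le {f f' : ℝ → ℝ} {ε c δ T : ℝ} (hc : 0 < c) (hεc : ε < c)
    (hδ : 0 < δ) (hT : c * (T + δ) < π) (hf : ∀ t, HasDerivAt f (f' t) t) (hf0 : f 0 = 1)
    (hf' : ∀ t, -f' t ≤ ε * √(1 - f t ^ 2)) :
    ∀ t ∈ Icc 0 T, cos (c * (t + δ)) ≤ f t := by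
  intro t ht
  have hbarrier : ∀ s, HasDerivAt (fun s => -cos (c * (s + δ))) (c * sin (c * (s + δ))) s :=
    fun s => by
      refine (((hasDerivAt_id s).add_const δ).const_mul c).cos.neg.congr_deriv ?_
      simp [mul_comm]
  have hneg := image_le_of_deriv_right_lt_deriv_boundary (f := fun s => -f s)
    (Differentiable.continuous fun s => (hf s).differentiableAt).neg.continuousOn
    (fun s _ => (hf s).neg.hasDerivWithinAt)
    (by simp [hf0, cos_le_one]) hbarrier ?_ ht
  · simpa using hneg
  intro s hs hcontact
  have hθ_pos : 0 < c * (s + δ) := mul_pos hc (by linarith [hs.1])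
  have hθ_lt : c * (s + δ) < π :=
    lt_of_lt_of_le (mul_lt_mul_of_pos_left (by linarith [hs.2]) hc) hT.le
  have hsin := sin_pos_of_pos_of_lt_pi hθ_pos hθ_lt
  have hsqrt : √(1 - f s ^ 2) = sin (c * (s + δ)) := by
    rw [show f s = cos (c * (s + δ)) by linarith [hcontact], ← sin_sq, sqrt_sq hsin.le]
  calc -f' s ≤ ε * sin (c * (s + δ)) := hsqrt ▸ hf' s
    _ < c * sin (c * (s + δ)) := mul_lt_mul_of_pos_right hεc hsin

theorem cos_mul_le_of_neg_deriv_le {f f' : ℝ → ℝ} {ε : ℝ} (hε : 0 ≤ ε)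
    (hf : ∀ t, HasDerivAt f (f' t) t) (hf0 : f 0 = 1) (hf' : ∀ t, -f' t ≤ ε * √(1 - f t ^ 2))
    {t : ℝ} (ht : 0 ≤ t) (hεt : ε * t < π) : cos (ε * t) ≤ f t := by
  have hcont : Continuous fun δ : ℝ => (ε + δ) * (t + δ) := by fun_prop
  have hlim : Tendsto (fun δ : ℝ => (ε + δ) * (t + δ)) (𝓝[>] 0) (𝓝 (ε * t)) := by
    simpa using hcont.continuousWithinAt.tendsto (s := Ioi 0) (x := 0)
  refine le_of_tendsto (continuous_cos.continuousAt.tendsto.comp hlim) ?_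
  filter_upwards [hlim.eventually (gt_mem_nhds hεt), self_mem_nhdsWithin] with δ hπ hδ
  exact cos_mul_add_le_of_neg_deriv_le (add_pos_of_nonneg_of_pos hε hδ)
    (lt_add_of_pos_right ε hδ) hδ hπ hf hf0 hf' t ⟨ht, le_rfl⟩

theorem sliding_mode_theorem_one_general (ε p₀ : ℝ) (hε : 0 < ε) (hp₀ : p₀ ∈ Set.Ioo (0:ℝ) 1)
    (ux uy : ℝ → ℝ)
    (hbound : ∀ t, Real.sqrt (ux t ^ 2 + uy t ^ 2) ≤ ε)
    (x y z : ℝ → ℝ)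
    (hx : ∀ t, HasDerivAt x (-(y t) + uy t * z t) t)
    (hy : ∀ t, HasDerivAt y (x t - ux t * z t) t)
    (hz : ∀ t, HasDerivAt z (-(uy t) * x t + ux t * y t) t)
    (hx0 : x 0 = 0) (hy0 : y 0 = 0) (hz0 : z 0 = 1) :
    ∀ t ∈ Set.Icc 0 (Real.arccos (1 - 2 * p₀) / ε), (1 - z t) / 2 ≤ p₀ := by
  have hsphere (t : ℝ) : x t ^ 2 + y t ^ 2 + z t ^ 2 = 1 := by
    simpa [hx0, hy0, hz0] using (IsBlochSolution.mk hx hy hz).sq_add_sq_add_sq_eq t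
  have hdz (t : ℝ) : -(-(uy t) * x t + ux t * y t) ≤ ε * √(1 - z t ^ 2) := by
    rw [show 1 - z t ^ 2 = x t ^ 2 + y t ^ 2 by linarith [hsphere t]]
    calc -(-(uy t) * x t + ux t * y t) = uy t * x t - ux t * y t := by ring
      _ ≤ √(ux t ^ 2 + uy t ^ 2) * √(x t ^ 2 + y t ^ 2) :=
        mul_sub_mul_le_sqrt_mul_sqrt (ux t) (uy t) (x t) (y t)
      _ ≤ ε * √(x t ^ 2 + y t ^ 2) := mul_le_mul_of_nonneg_right (hbound t) (sqrt_nonneg _)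
  obtain ⟨hp0, hp1⟩ := hp₀
  rintro t ⟨ht0, htT⟩
  have hεt : ε * t ≤ arccos (1 - 2 * p₀) := by rwa [le_div_iff₀ hε, mul_comm] at htT
  have hz_ge := cos_mul_le_of_neg_deriv_le hε.le hz hz0 hdz ht0
    (hεt.trans_lt (arccos_lt_pi.2 (by linarith)))
  have hcos := cos_le_cos_of_nonneg_of_le_pi (by positivity) (arccos_le_pi _) hεt
  rw [cos_arccos (by linarith) (by linarith)] at hcos
  linarith

/-- Theorem 1 (Bloch form): under `H(t) = I_z + ε_x(t)I_x + ε_y(t)I_y` with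
`√(ε_x² + ε_y²) ≤ ε`, starting from Bloch vector `(0,0,1)`, the failure probability
`(1 - z(t))/2` is at most `p₀` on `[0, arccos(1-2p₀)/ε]`. -/
theorem sliding_mode_theorem_one (ε p₀ : ℝ) (hε : 0 < ε) (hp₀ : p₀ ∈ Set.Ioo (0:ℝ) 1)
    (ux uy : ℝ → ℝ) (hux : Measurable ux) (huy : Measurable uy)
    (hbound : ∀ t, Real.sqrt (ux t ^ 2 + uy t ^ 2) ≤ ε)
    (x y z : ℝ → ℝ)
    (hx : ∀ t, HasDerivAt x (-(y t) + uy t * z t) t)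
    (hy : ∀ t, HasDerivAt y (x t - ux t * z t) t)
    (hz : ∀ t, HasDerivAt z (-(uy t) * x t + ux t * y t) t)
    (hx0 : x 0 = 0) (hy0 : y 0 = 0) (hz0 : z 0 = 1) :
    ∀ t ∈ Set.Icc 0 (Real.arccos (1 - 2 * p₀) / ε), (1 - z t) / 2 ≤ p₀ :=
  sliding_mode_theorem_one_general ε p₀ hε hp₀ ux uy hbound x y z hx hy hz hx0 hy0 hz0
end

section
/- Let ε > 0 and ω = √(1+ε²). For t_f ∈ [0, π/ω] and t ∈ [0, t_f], the quantity h(t) = -(ε̄/ω³)[sin(ωt) + ε² sin(ωt_f) + sin(ω(t_f - t))] (with ε̄ = ±ε fixed) does not change sign: it satisfies sgn(h(t)) = -sgn(ε̄) whenever the bracketed sum is positive, and the bracketed sum sin(ωt) + ε² sin(ωt_f) + sin(ω(t_f - t)) ≥ 0 for all such t, t_f. -/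
open Real

theorem Real.sign_mul_of_pos {a x : ℝ} (hx : 0 < x) : Real.sign (a * x) = Real.sign a := by
  rcases lt_trichotomy a 0 with ha | rfl | ha
  · rw [sign_of_neg (mul_neg_of_neg_of_pos ha hx), sign_of_neg ha]
  · rw [zero_mul]
  · rw [sign_of_pos (mul_pos ha hx), sign_of_pos ha]

theorem sin_mul_nonneg_of_mem_Icc {ω s T : ℝ} (hω : 0 ≤ ω) (hT : ω * T ≤ π)
    (hs : s ∈ Set.Icc 0 T) : 0 ≤ Real.sin (ω * s) :=
  sin_nonneg_of_nonneg_of_le_pi (mul_nonneg hω hs.1) ((mul_le_mul_of_nonneg_left hs.2 hω).trans hT)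

theorem sin_add_mul_sin_add_sin_sub_nonneg {ω c T t : ℝ} (hω : 0 ≤ ω) (hc : 0 ≤ c)
    (hT : ω * T ≤ π) (ht : t ∈ Set.Icc 0 T) :
    0 ≤ Real.sin (ω * t) + c * Real.sin (ω * T) + Real.sin (ω * (T - t)) := by
  have hsin_t := sin_mul_nonneg_of_mem_Icc hω hT ht
  have hsin_T := sin_mul_nonneg_of_mem_Icc hω hT ⟨ht.1.trans ht.2, le_rfl⟩
  have hsin_sub := sin_mul_nonneg_of_mem_Icc hω hT
    ⟨sub_nonneg.mpr ht.2, sub_le_self T ht.1⟩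
  have := mul_nonneg hc hsin_T
  linarith

theorem switching_function_sign_general (ε : ℝ)
    (ω : ℝ) (hω : ω = Real.sqrt (1 + ε ^ 2))
    (εb : ℝ)
    (tf : ℝ) (htf : tf ∈ Set.Icc 0 (π / ω)) :
    ∀ t ∈ Set.Icc 0 tf,
      0 ≤ Real.sin (ω * t) + ε ^ 2 * Real.sin (ω * tf) + Real.sin (ω * (tf - t)) ∧
      (0 < Real.sin (ω * t) + ε ^ 2 * Real.sin (ω * tf) + Real.sin (ω * (tf - t)) →
        Real.sign (-(εb / ω ^ 3) *
          (Real.sin (ω * t) + ε ^ 2 * Real.sin (ω * tf) + Real.sin (ω * (tf - t)))) =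
          -Real.sign εb) := by
  intro t ht
  have hω_pos : 0 < ω := hω ▸ Real.sqrt_pos.mpr (by positivity)
  have hωtf : ω * tf ≤ π := (le_div_iff₀' hω_pos).mp htf.2
  refine ⟨sin_add_mul_sin_add_sin_sub_nonneg hω_pos.le (sq_nonneg ε) hωtf ht, fun hsum => ?_⟩
  rw [neg_mul, Real.sign_neg, Real.sign_mul_of_pos hsum, div_eq_mul_inv,
    Real.sign_mul_of_pos (by positivity)]

/-- The switching function `h(t) = -(ε̄/ω³)[sin(ωt) + ε²sin(ωt_f) + sin(ω(t_f-t))]` from the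
Pontryagin analysis does not change sign on `[0, t_f]` for `t_f ∈ [0, π/ω]`: the bracketed sum
is nonnegative, and whenever it is positive, `sgn(h(t)) = -sgn(ε̄)`. -/
theorem switching_function_sign (ε : ℝ) (hε : 0 < ε)
    (ω : ℝ) (hω : ω = Real.sqrt (1 + ε ^ 2))
    (εb : ℝ) (hεb : εb = ε ∨ εb = -ε)
    (tf : ℝ) (htf : tf ∈ Set.Icc 0 (π / ω)) :
    ∀ t ∈ Set.Icc 0 tf,
      0 ≤ Real.sin (ω * t) + ε ^ 2 * Real.sin (ω * tf) + Real.sin (ω * (tf - t)) ∧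
      (0 < Real.sin (ω * t) + ε ^ 2 * Real.sin (ω * tf) + Real.sin (ω * (tf - t)) →
        Real.sign (-(εb / ω ^ 3) *
          (Real.sin (ω * t) + ε ^ 2 * Real.sin (ω * tf) + Real.sin (ω * (tf - t)))) =
          -Real.sign εb) :=
  switching_function_sign_general ε ω hω εb tf htf
end
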